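/- arXiv:2011.03314 — 2 statements merged into one kernel-verified Lean document; each statement's English description precedes it below -/
import Mathlib

section
/- Let r ∈ ℝ, μ > r, σ > 0, τ > 0, S > 0, α ∈ (0,1), h > 0, λ₂ ∈ (0, μ − r), and set ν := r − σ²/2 and ν̃ := μ − σ²/2. For k ∈ ℝ define d(k, S') := (k − ln S' − ν·τ)/(σ·√τ), d̃(k, S') := (k − ln S' − ν̃·τ)/(σ·√τ), and ℓ(k) := h − (h + e^{rτ})/Φ(d(k, S)). Then lim_{k → −∞} [ −(1/α)·( ℓ(k)·Φ(d̃(k, S·e^{−λ₂τ})) + h·( α − Φ(d̃(k, S·e^{−λ₂τ})) ) ) ] = −h. -/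
/-!
Since `d'(k, S e^{-λ₂τ}) = d(k, S) + c` with `c = (λ₂ - (μ - r))√τ/σ < 0`, the Expected Shortfall
equals `-h + (h + e^{rτ})/α · Φ(d + c)/Φ(d)`. The ratio `Φ(x + c)/Φ(x)` tends to `0` as
`x → -∞` by L'Hôpital's rule, the ratio of the densities being `exp (-c x - c²/2)`.
-/

open MeasureTheory ProbabilityTheory Real Filter Set

/-- Cumulative distribution function of the standard normal distribution. -/
noncomputable def stdNormalCDF : ℝ → ℝ :=
  fun x => ProbabilityTheory.cdf (ProbabilityTheory.gaussianReal 0 1) x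

open scoped NNReal Topology

lemma cdf_gaussianReal_eq_integral (m : ℝ) {v : ℝ≥0} (hv : v ≠ 0) (x : ℝ) :
    cdf (gaussianReal m v) x = ∫ t in Iic x, gaussianPDFReal m v t := by
  rw [cdf_eq_real, measureReal_def, gaussianReal_apply_eq_integral m hv,
    ENNReal.toReal_ofReal (integral_nonneg fun t => gaussianPDFReal_nonneg m v t)]

lemma cdf_gaussianReal_pos (m : ℝ) {v : ℝ≥0} (hv : v ≠ 0) (x : ℝ) :
    0 < cdf (gaussianReal m v) x := by
  rw [cdf_eq_real, measureReal_def]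
  refine ENNReal.toReal_pos (fun h => ?_) (measure_ne_top _ _)
  simpa using gaussianReal_absolutelyContinuous' m hv h

lemma continuous_gaussianPDFReal (m : ℝ) (v : ℝ≥0) : Continuous (gaussianPDFReal m v) := by
  rw [gaussianPDFReal_def]
  fun_prop

lemma hasDerivAt_cdf_gaussianReal (m : ℝ) {v : ℝ≥0} (hv : v ≠ 0) (x : ℝ) :
    HasDerivAt (cdf (gaussianReal m v)) (gaussianPDFReal m v x) x := by
  have hsplit : cdf (gaussianReal m v) =
      fun u => cdf (gaussianReal m v) 0 + ∫ t in (0)..u, gaussianPDFReal m v t := by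
    ext u
    simp only [cdf_gaussianReal_eq_integral m hv]
    rw [← intervalIntegral.integral_Iic_sub_Iic (integrable_gaussianPDFReal m v).integrableOn
      (integrable_gaussianPDFReal m v).integrableOn, add_sub_cancel]
  rw [hsplit]
  exact ((continuous_gaussianPDFReal m v).integral_hasStrictDerivAt 0 x).hasDerivAt.const_add _

lemma gaussianPDFReal_add_div_gaussianPDFReal (x c : ℝ) :
    gaussianPDFReal 0 1 (x + c) / gaussianPDFReal 0 1 x = exp (-(c * x) - c ^ 2 / 2) := by
  rw [div_eq_iff (gaussianPDFReal_pos 0 1 x one_ne_zero).ne']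
  simp only [gaussianPDFReal, NNReal.coe_one, mul_one, sub_zero]
  rw [mul_left_comm, ← exp_add]
  ring_nf

lemma tendsto_stdNormalCDF_add_div_atBot {c : ℝ} (hc : c < 0) :
    Tendsto (fun x => stdNormalCDF (x + c) / stdNormalCDF x) atBot (𝓝 0) := by
  have hΦ : Tendsto stdNormalCDF atBot (𝓝 0) := tendsto_cdf_atBot _
  refine HasDerivAt.lhopital_zero_atBot
    (.of_forall fun x => (hasDerivAt_cdf_gaussianReal 0 one_ne_zero (x + c)).comp_add_const x c)
    (.of_forall fun x => hasDerivAt_cdf_gaussianReal 0 one_ne_zero x)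
    (.of_forall fun x => (gaussianPDFReal_pos 0 1 x one_ne_zero).ne')
    (hΦ.comp (tendsto_atBot_add_const_right _ c tendsto_id)) hΦ ?_
  simp only [gaussianPDFReal_add_div_gaussianPDFReal]
  refine tendsto_exp_atBot.comp (tendsto_atBot_add_const_right _ _ ?_)
  exact tendsto_neg_atTop_atBot.comp (tendsto_id.const_mul_atBot_of_neg hc)

theorem digital_ES_down_shifted_spot_limit_general
    (r μ σ τ S α h lam₂ : ℝ) (hσ : 0 < σ) (hτ : 0 < τ) (hS : 0 < S)
    (hα₁ : 0 < α)
    (hlam₂ : lam₂ < μ - r)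
    (ν ν' : ℝ) (hν : ν = r - σ^2/2) (hν' : ν' = μ - σ^2/2)
    (d d' : ℝ → ℝ → ℝ)
    (hd : ∀ k S', d k S' = (k - Real.log S' - ν*τ) / (σ * Real.sqrt τ))
    (hd' : ∀ k S', d' k S' = (k - Real.log S' - ν'*τ) / (σ * Real.sqrt τ))
    (l : ℝ → ℝ) (hl : ∀ k, l k = h - (h + Real.exp (r*τ)) / stdNormalCDF (d k S)) :
    Filter.Tendsto
      (fun k : ℝ => -(1/α) *
        (l k * stdNormalCDF (d' k (S * Real.exp (-(lam₂*τ))))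
          + h * (α - stdNormalCDF (d' k (S * Real.exp (-(lam₂*τ)))))))
      Filter.atBot (nhds (-h)) := by
  have hsqrt : 0 < √τ := sqrt_pos.mpr hτ
  set c := (lam₂ - (μ - r)) * √τ / σ with hc_def
  have hc : c < 0 := div_neg_of_neg_of_pos (mul_neg_of_neg_of_pos (by linarith) hsqrt) hσ
  have hshift : ∀ k, d' k (S * exp (-(lam₂ * τ))) = d k S + c := fun k => by
    rw [hd', hd, hc_def, log_mul hS.ne' (exp_ne_zero _), log_exp, hν, hν']
    field_simp
    rw [sq_sqrt hτ.le]
    ring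
  have hES : ∀ k, -(1/α) * (l k * stdNormalCDF (d' k (S * exp (-(lam₂*τ))))
        + h * (α - stdNormalCDF (d' k (S * exp (-(lam₂*τ))))))
      = -h + (h + exp (r*τ)) / α * (stdNormalCDF (d k S + c) / stdNormalCDF (d k S)) :=
    fun k => by
      have : stdNormalCDF (d k S) ≠ 0 := (cdf_gaussianReal_pos 0 one_ne_zero _).ne'
      rw [hshift, hl]
      field_simp
      ring
  have hd_atBot : Tendsto (fun k => d k S) atBot atBot := by
    simp only [hd, sub_eq_add_neg]
    exact (tendsto_atBot_add_const_right _ _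
      (tendsto_atBot_add_const_right _ _ tendsto_id)).atBot_div_const (mul_pos hσ hsqrt)
  simp only [hES]
  simpa using tendsto_const_nhds.add
    (((tendsto_stdNormalCDF_add_div_atBot hc).comp hd_atBot).const_mul ((h + exp (r*τ)) / α))

/-- As the strike `k → -∞`, the Expected Shortfall at level `α`, at the
down-shifted spot `S·e^{-λ₂τ}`, of the budget-constrained digital option paying
`h` above `e^k` and `ℓ(k)` below, tends to `-h`. -/
theorem digital_ES_down_shifted_spot_limit
    (r μ σ τ S α h lam₂ : ℝ) (hμ : r < μ) (hσ : 0 < σ) (hτ : 0 < τ) (hS : 0 < S)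
    (hα₁ : 0 < α) (hα₂ : α < 1) (hh : 0 < h)
    (hlam₁ : 0 < lam₂) (hlam₂ : lam₂ < μ - r)
    (ν ν' : ℝ) (hν : ν = r - σ^2/2) (hν' : ν' = μ - σ^2/2)
    (d d' : ℝ → ℝ → ℝ)
    (hd : ∀ k S', d k S' = (k - Real.log S' - ν*τ) / (σ * Real.sqrt τ))
    (hd' : ∀ k S', d' k S' = (k - Real.log S' - ν'*τ) / (σ * Real.sqrt τ))
    (l : ℝ → ℝ) (hl : ∀ k, l k = h - (h + Real.exp (r*τ)) / stdNormalCDF (d k S)) :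
    Filter.Tendsto
      (fun k : ℝ => -(1/α) *
        (l k * stdNormalCDF (d' k (S * Real.exp (-(lam₂*τ))))
          + h * (α - stdNormalCDF (d' k (S * Real.exp (-(lam₂*τ)))))))
      Filter.atBot (nhds (-h)) :=
  digital_ES_down_shifted_spot_limit_general r μ σ τ S α h lam₂ hσ hτ hS hα₁ hlam₂ ν ν' hν hν' d d'
    hd hd' l hl
end

section
/- Let r ∈ ℝ, μ > r, σ > 0, τ > 0, S > 0, α ∈ (0,1), λ₁ > 0, λ₂ ∈ (0, μ − r), and set ν := r − σ²/2, ν̃ := μ − σ²/2, d(k, S') := (k − ln S' − ν·τ)/(σ·√τ) and d̃(k, S') := (k − ln S' − ν̃·τ)/(σ·√τ). Let U : ℝ → ℝ be nondecreasing with U(0) = 0, and let u < sup_{x∈ℝ} U(x). Then there exist k ∈ ℝ, h > 0 and ℓ < 0 such that: (a) e^{−rτ}( ℓ·Φ(d(k, S·e^{λ₁τ})) + h(1 − Φ(d(k, S·e^{λ₁τ}))) ) ≥ 1 (the price at the up-shifted spot is at least 1); (b) e^{−rτ}( ℓ·Φ(d(k, S)) + h(1 − Φ(d(k, S))) ) =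 −1 (the price at spot S equals −1); (c) −(1/α)( ℓ·Φ(d̃(k, S·e^{−λ₂τ})) + h(α − Φ(d̃(k, S·e^{−λ₂τ}))) ) ≤ −1 (the Expected Shortfall at the down-shifted spot is at most −1); (d) U(h)·(1 − Φ(d̃(k, S))) ≥ u (the expected utility at spot S is at least u). -/
/-!
Send the strike to `0` (`k → -∞`) with the payoff `h` fixed and large, choosing the short leg `ℓ`
so that the price at spot `S` is exactly `-1`. With `x := d(k, S) → -∞`, the other three
quantities evaluate `Φ` at `x - c` for constants `c` (the spot shifts and the drift change
`ν ↦ ν̃`), with `c > 0` wherever `ℓ` appears. The Gaussian tail bound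
`Φ(x - c) ≤ e^{cx - c²/2} Φ(x)` makes `ℓ Φ(x - c) ≈ (Φ(x - c) / Φ(x)) · (-e^{rτ} - h)` vanish, so the
three quantities tend to `e^{-rτ} h`, `-h` and `U(h)`, which beat `1`, `-1` and `u` once
`h > max(e^{rτ}, 1)` and `U(h) > u`.
-/

open MeasureTheory ProbabilityTheory Real Filter Set

open scoped Topology

lemma stdNormalCDF_eq_setIntegral (x : ℝ) :
    stdNormalCDF x = ∫ t in Iic x, gaussianPDFReal 0 1 t := by
  rw [stdNormalCDF, cdf_eq_real, measureReal_def, gaussianReal_apply_eq_integral 0 one_ne_zero,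
    ENNReal.toReal_ofReal (integral_nonneg fun t => gaussianPDFReal_nonneg 0 1 t)]

lemma stdNormalCDF_pos (x : ℝ) : 0 < stdNormalCDF x := by
  rw [stdNormalCDF, cdf_eq_real, measureReal_def]
  refine ENNReal.toReal_pos (fun h => ?_) (measure_ne_top _ _)
  simpa [Real.volume_Iic] using gaussianReal_absolutelyContinuous' 0 one_ne_zero h

lemma tendsto_stdNormalCDF_sub_atBot (c : ℝ) :
    Tendsto (fun x => stdNormalCDF (x - c)) atBot (𝓝 0) :=
  (tendsto_cdf_atBot (gaussianReal 0 1)).comp (tendsto_atBot_add_const_right _ (-c) tendsto_id)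

lemma setIntegral_Iic_sub_comp_add_right (f : ℝ → ℝ) (x c : ℝ) :
    ∫ t in Iic (x - c), f (t + c) = ∫ t in Iic x, f t := by
  have hpre : (fun t => t + c) ⁻¹' Iic x = Iic (x - c) := by
    ext t; simp [le_sub_iff_add_le]
  rw [← hpre, (measurePreserving_add_right volume c).setIntegral_preimage_emb
    (measurableEmbedding_addRight c)]

/-- Gaussian tail comparison: `φ(t - c) = e^{ct - c²/2} φ(t)` and `ct ≤ cx` for `t ≤ x`. -/
lemma stdNormalCDF_sub_le {c : ℝ} (hc : 0 ≤ c) (x : ℝ) :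
    stdNormalCDF (x - c) ≤ exp (c * x - c ^ 2 / 2) * stdNormalCDF x := by
  rw [stdNormalCDF_eq_setIntegral, stdNormalCDF_eq_setIntegral,
    ← setIntegral_Iic_sub_comp_add_right _ x c, ← integral_const_mul]
  refine setIntegral_mono_on (integrable_gaussianPDFReal 0 1).integrableOn
    (((integrable_gaussianPDFReal 0 1).comp_add_right c).const_mul _).integrableOn
    measurableSet_Iic fun t ht => ?_
  simp only [gaussianPDFReal, NNReal.coe_one, mul_one, sub_zero]
  rw [mul_left_comm, ← exp_add]
  gcongr
  nlinarith [mul_nonneg hc (sub_nonneg.mpr (mem_Iic.mp ht))]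

lemma tendsto_stdNormalCDF_sub_div_atBot {c : ℝ} (hc : 0 < c) :
    Tendsto (fun x => stdNormalCDF (x - c) / stdNormalCDF x) atBot (𝓝 0) := by
  have hexp : Tendsto (fun x => exp (c * x - c ^ 2 / 2)) atBot (𝓝 0) :=
    tendsto_exp_atBot.comp
      (tendsto_atBot_add_const_right _ _ (tendsto_id.const_mul_atBot hc))
  refine squeeze_zero (fun x => div_nonneg (cdf_nonneg _ _) (stdNormalCDF_pos x).le)
    (fun x => ?_) hexp
  rw [div_le_iff₀ (stdNormalCDF_pos x)]
  exact stdNormalCDF_sub_le hc.le x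

/-- `D` stands for the discount factor `e^{-rτ}` and `p` for `Φ(d(k, S))`. -/
noncomputable def budgetShortLeg (D h p : ℝ) : ℝ := (-D⁻¹ - h * (1 - p)) / p

section budgetShortLeg

variable {D h : ℝ}

lemma budgetShortLeg_neg (hD : 0 < D) (hh : 0 ≤ h) {p : ℝ} (hp₀ : 0 < p) (hp₁ : p ≤ 1) :
    budgetShortLeg D h p < 0 :=
  div_neg_of_neg_of_pos (by nlinarith [inv_pos.mpr hD]) hp₀

lemma discount_mul_budgetShortLeg (hD : D ≠ 0) {p : ℝ} (hp : p ≠ 0) :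
    D * (budgetShortLeg D h p * p + h * (1 - p)) = -1 := by
  rw [budgetShortLeg, div_mul_cancel₀ _ hp]
  field_simp
  ring

lemma tendsto_budgetShortLeg_mul_stdNormalCDF_sub {c : ℝ} (hc : 0 < c) :
    Tendsto (fun x => budgetShortLeg D h (stdNormalCDF x) * stdNormalCDF (x - c))
      atBot (𝓝 0) := by
  have hnum : Tendsto (fun x => -D⁻¹ - h * (1 - stdNormalCDF x)) atBot
      (𝓝 (-D⁻¹ - h * (1 - 0))) :=
    tendsto_const_nhds.sub (tendsto_const_nhds.mul
      (tendsto_const_nhds.sub (tendsto_cdf_atBot _)))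
  have hprod := (tendsto_stdNormalCDF_sub_div_atBot hc).mul hnum
  rw [zero_mul] at hprod
  refine hprod.congr fun x => ?_
  rw [budgetShortLeg]
  ring

lemma tendsto_budgetShortLeg_mul_add_sub_atBot {c : ℝ} (hc : 0 < c) (a : ℝ) :
    Tendsto (fun x => budgetShortLeg D h (stdNormalCDF x) * stdNormalCDF (x - c)
      + h * (a - stdNormalCDF (x - c))) atBot (𝓝 (h * a)) := by
  simpa using (tendsto_budgetShortLeg_mul_stdNormalCDF_sub hc).add
    (tendsto_const_nhds.mul (tendsto_const_nhds.sub (tendsto_stdNormalCDF_sub_atBot c)))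

lemma eventually_price_sub_ge_one (hDh : 1 < D * h) {c : ℝ} (hc : 0 < c) :
    ∀ᶠ x in atBot, 1 ≤ D * (budgetShortLeg D h (stdNormalCDF x) * stdNormalCDF (x - c)
      + h * (1 - stdNormalCDF (x - c))) := by
  have hlim := (tendsto_budgetShortLeg_mul_add_sub_atBot (D := D) (h := h) hc 1).const_mul D
  rw [mul_one] at hlim
  exact hlim.eventually (eventually_ge_nhds hDh)

lemma eventually_expectedShortfall_sub_le_neg_one {α : ℝ} (hα : 0 < α) (hh : 1 < h)
    {c : ℝ} (hc : 0 < c) :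
    ∀ᶠ x in atBot, -(1 / α) * (budgetShortLeg D h (stdNormalCDF x) * stdNormalCDF (x - c)
      + h * (α - stdNormalCDF (x - c))) ≤ -1 := by
  have hlim := (tendsto_budgetShortLeg_mul_add_sub_atBot (D := D) (h := h) hc α).const_mul
    (-(1 / α))
  rw [show -(1 / α) * (h * α) = -h by field_simp] at hlim
  exact hlim.eventually (eventually_le_nhds (neg_lt_neg hh))

end budgetShortLeg

lemma eventually_le_mul_one_sub_stdNormalCDF_sub {u v : ℝ} (huv : u < v) (c : ℝ) :
    ∀ᶠ x in atBot, u ≤ v * (1 - stdNormalCDF (x - c)) := by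
  have hlim := tendsto_const_nhds (x := v).mul
    (tendsto_const_nhds (x := (1 : ℝ)).sub (tendsto_stdNormalCDF_sub_atBot c))
  exact hlim.eventually (eventually_ge_nhds (by simpa using huv))

theorem digital_option_meets_budget_ES_and_utility_general
    (r μ σ τ S α lam₁ lam₂ : ℝ) (hσ : 0 < σ) (hτ : 0 < τ)
    (hS : 0 < S) (hα₁ : 0 < α)
    (hlam₁ : 0 < lam₁) (hlam₂' : lam₂ < μ - r)
    (ν ν' : ℝ) (hν : ν = r - σ^2/2) (hν' : ν' = μ - σ^2/2)
    (d d' : ℝ → ℝ → ℝ)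
    (hd : ∀ k S', d k S' = (k - Real.log S' - ν*τ) / (σ * Real.sqrt τ))
    (hd' : ∀ k S', d' k S' = (k - Real.log S' - ν'*τ) / (σ * Real.sqrt τ))
    (U : ℝ → ℝ) (hU : Monotone U)
    (u : ℝ) (hu : ∃ x : ℝ, u < U x) :
    ∃ k h l : ℝ, 0 < h ∧ l < 0 ∧
      Real.exp (-(r*τ)) * (l * stdNormalCDF (d k (S * Real.exp (lam₁*τ)))
          + h * (1 - stdNormalCDF (d k (S * Real.exp (lam₁*τ))))) ≥ 1 ∧
      Real.exp (-(r*τ)) * (l * stdNormalCDF (d k S)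
          + h * (1 - stdNormalCDF (d k S))) = -1 ∧
      -(1/α) * (l * stdNormalCDF (d' k (S * Real.exp (-(lam₂*τ))))
          + h * (α - stdNormalCDF (d' k (S * Real.exp (-(lam₂*τ)))))) ≤ -1 ∧
      U h * (1 - stdNormalCDF (d' k S)) ≥ u := by
  obtain ⟨x₀, hx₀⟩ := hu
  set h := max x₀ (exp (r * τ) + 1)
  have hh : exp (r * τ) + 1 ≤ h := le_max_right _ _
  have hh₁ : 1 < h := by linarith [exp_pos (r * τ)]
  have hh₀ : 0 < h := by linarith
  have hDh : 1 < exp (-(r * τ)) * h := by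
    rw [exp_neg, inv_mul_eq_div, one_lt_div (exp_pos _)]
    linarith
  have hs : 0 < σ * √τ := by positivity
  set g := fun k => d k S
  have hg : Tendsto g atBot atBot := by
    refine ((tendsto_atBot_add_const_right _ (-(log S + ν * τ)) tendsto_id).atBot_div_const
      hs).congr fun k => ?_
    simp only [g, hd, id]
    ring
  have hd_shift : ∀ k a, d k (S * exp a) = g k - a / (σ * √τ) := fun k a => by
    simp only [g, hd, log_mul hS.ne' (exp_ne_zero a), log_exp]
    ring
  have hd'_eq : ∀ k S', d' k S' = d k S' - (μ - r) * τ / (σ * √τ) := fun k S' => by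
    simp only [hd, hd', hν, hν']
    ring
  have hd'_shift : ∀ k, d' k (S * exp (-(lam₂ * τ))) = g k - (μ - r - lam₂) * τ / (σ * √τ) :=
    fun k => by
      rw [hd'_eq, hd_shift]
      ring
  obtain ⟨k, hka, hkc, hku⟩ := (hg.eventually
    ((eventually_price_sub_ge_one hDh (div_pos (mul_pos hlam₁ hτ) hs)).and
    ((eventually_expectedShortfall_sub_le_neg_one hα₁ hh₁
      (div_pos (mul_pos (sub_pos.mpr hlam₂') hτ) hs)).and
    (eventually_le_mul_one_sub_stdNormalCDF_sub (lt_of_lt_of_le hx₀ (hU (le_max_left _ _)))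
      ((μ - r) * τ / (σ * √τ)))))).exists
  refine ⟨k, h, budgetShortLeg (exp (-(r * τ))) h (stdNormalCDF (g k)), hh₀,
    budgetShortLeg_neg (exp_pos _) hh₀.le (stdNormalCDF_pos _)
      (cdf_le_one _ _), ?_, discount_mul_budgetShortLeg (exp_ne_zero _) (stdNormalCDF_pos _).ne',
    ?_, ?_⟩
  · rwa [hd_shift]
  · rwa [hd'_shift]
  · rwa [hd'_eq]

/-- A limited-liability derivatives trader can find a digital option meeting the
budget constraint (price `-1` at spot `S`), remaining valuable at the up-shifted
spot, satisfying the Expected Shortfall constraint at the down-shifted spot, and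
achieving expected utility at least `u` for any `u < sup U`. -/
theorem digital_option_meets_budget_ES_and_utility
    (r μ σ τ S α lam₁ lam₂ : ℝ) (hμ : r < μ) (hσ : 0 < σ) (hτ : 0 < τ)
    (hS : 0 < S) (hα₁ : 0 < α) (hα₂ : α < 1)
    (hlam₁ : 0 < lam₁) (hlam₂ : 0 < lam₂) (hlam₂' : lam₂ < μ - r)
    (ν ν' : ℝ) (hν : ν = r - σ^2/2) (hν' : ν' = μ - σ^2/2)
    (d d' : ℝ → ℝ → ℝ)
    (hd : ∀ k S', d k S' = (k - Real.log S' - ν*τ) / (σ * Real.sqrt τ))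
    (hd' : ∀ k S', d' k S' = (k - Real.log S' - ν'*τ) / (σ * Real.sqrt τ))
    (U : ℝ → ℝ) (hU : Monotone U) (hU0 : U 0 = 0)
    (u : ℝ) (hu : ∃ x : ℝ, u < U x) :
    ∃ k h l : ℝ, 0 < h ∧ l < 0 ∧
      Real.exp (-(r*τ)) * (l * stdNormalCDF (d k (S * Real.exp (lam₁*τ)))
          + h * (1 - stdNormalCDF (d k (S * Real.exp (lam₁*τ))))) ≥ 1 ∧
      Real.exp (-(r*τ)) * (l * stdNormalCDF (d k S)
          + h * (1 - stdNormalCDF (d k S))) = -1 ∧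
      -(1/α) * (l * stdNormalCDF (d' k (S * Real.exp (-(lam₂*τ))))
          + h * (α - stdNormalCDF (d' k (S * Real.exp (-(lam₂*τ)))))) ≤ -1 ∧
      U h * (1 - stdNormalCDF (d' k S)) ≥ u :=
  digital_option_meets_budget_ES_and_utility_general r μ σ τ S α lam₁ lam₂ hσ hτ hS hα₁ hlam₁ hlam₂'
    ν ν' hν hν' d d' hd hd' U hU u hu
end
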